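/- arXiv:1603.07538 — 7 statements merged into one kernel-verified Lean document; each statement's English description precedes it below -/
import Mathlib

section
/- Soundness of the spoofing-protection certification algorithm for a single interface (Theorem 1, single-interface form): if `sp rs ∅ ∅` holds, then every packet `p` with `iface p = i` that is accepted by the ruleset `rs` satisfies `src p ∈ R`. -/
inductive FwAction : Type
  | Accept : FwAction
  | Drop : FwAction

/-- A packet is accepted by a ruleset if the first matching rule has action `Accept`. -/
def accepted {P M : Type*} (Matches : M → P → Prop) :
    List (M × FwAction) → P → Prop
  | [], _ => False
  | (m, a) :: rs, p =>
      (Matches m p ∧ a = FwAction.Accept) ∨ (¬ Matches m p ∧ accepted Matches rs p)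

/-- A packet is denied by a ruleset if the first matching rule has action `Drop`. -/
def denied {P M : Type*} (Matches : M → P → Prop) :
    List (M × FwAction) → P → Prop
  | [], _ => False
  | (m, a) :: rs, p =>
      (Matches m p ∧ a = FwAction.Drop) ∨ (¬ Matches m p ∧ denied Matches rs p)

/-- The certification algorithm `sp` for interface `i` and allowed range `R`. -/
def sp {Iface IP P M : Type*} (iface : P → Iface) (src : P → IP)
    (Matches : M → P → Prop) (i : Iface) (R : Set IP) :
    List (M × FwAction) → Set IP → Set IP → Prop
  | [], A, D => (A \ D) ⊆ R
  | (m, FwAction.Accept) :: rs, A, D =>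
      sp iface src Matches i R rs
        (A ∪ {x | ∃ p, iface p = i ∧ src p = x ∧ Matches m p}) D
  | (m, FwAction.Drop) :: rs, A, D =>
      sp iface src Matches i R rs A
        (D ∪ ({x | ∀ p, (iface p = i ∧ src p = x) → Matches m p} \ A))

/-- Exactly-accepted source addresses on interface `i`. -/
def Aexact {Iface IP P M : Type*} (iface : P → Iface) (src : P → IP)
    (Matches : M → P → Prop) (i : Iface) (rs : List (M × FwAction)) : Set IP :=
  {x | ∃ p, iface p = i ∧ src p = x ∧ accepted Matches rs p}

/-- Exactly-denied source addresses on interface `i`. -/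
def Dexact {Iface IP P M : Type*} (iface : P → Iface) (src : P → IP)
    (Matches : M → P → Prop) (i : Iface) (rs : List (M × FwAction)) : Set IP :=
  {x | ∀ p, (iface p = i ∧ src p = x) → denied Matches rs p}


theorem sp_invariant {Iface IP P M : Type*}
    (iface : P → Iface) (src : P → IP) (Matches : M → P → Prop)
    (i : Iface) (R : Set IP) :
    ∀ (rs : List (M × FwAction)) (A D : Set IP),
      sp iface src Matches i R rs A D →
      ∀ x, (x ∈ A ∨ ∃ p, iface p = i ∧ src p = x ∧ accepted Matches rs p) →
        x ∉ D → x ∈ R := by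
  intro rs
  induction rs with
  | nil =>
    intro A D h x hx hxD
    rcases hx with hA | ⟨p, _, _, hacc⟩
    · exact h ⟨hA, hxD⟩
    · exact absurd hacc (by simp [accepted])
  | cons r rs ih =>
    obtain ⟨m, a⟩ := r
    cases a with
    | Accept =>
      intro A D h x hx hxD
      refine ih _ _ h x ?_ hxD
      rcases hx with hA | ⟨p, hi, hs, hacc⟩
      · exact Or.inl (Or.inl hA)
      · rcases hacc with ⟨hm, _⟩ | ⟨hnm, hacc⟩
        · exact Or.inl (Or.inr ⟨p, hi, hs, hm⟩)
        · exact Or.inr ⟨p, hi, hs, hacc⟩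
    | Drop =>
      intro A D h x hx hxD
      refine ih _ _ h x ?_ ?_
      · rcases hx with hA | ⟨p, hi, hs, hacc⟩
        · exact Or.inl hA
        · rcases hacc with ⟨_, heq⟩ | ⟨_, hacc⟩
          · exact absurd heq (by simp)
          · exact Or.inr ⟨p, hi, hs, hacc⟩
      · intro hxD'
        rcases hxD' with hD | ⟨hS, hnA⟩
        · exact hxD hD
        · rcases hx with hA | ⟨p, hi, hs, hacc⟩
          · exact hnA hA
          · rcases hacc with ⟨_, heq⟩ | ⟨hnm, _⟩
            · exact absurd heq (by simp)
            · exact hnm (hS p ⟨hi, hs⟩)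

theorem sp_sound_single_interface {Iface IP P M : Type*}
    (iface : P → Iface) (src : P → IP) (Matches : M → P → Prop)
    (i : Iface) (R : Set IP) (rs : List (M × FwAction))
    (h : sp iface src Matches i R rs ∅ ∅) :
    ∀ p : P, iface p = i → accepted Matches rs p → src p ∈ R := by
  intro p hi hacc
  exact sp_invariant iface src Matches i R rs ∅ ∅ h (src p)
    (Or.inr ⟨p, hi, rfl, hacc⟩) (by simp)
end

section
/- Soundness of the spoofing-protection certification algorithm for all interfaces (Theorem 1): let `ipassmt : Iface → Set IP` assign an allowed source range to each interface and let `S : Set Iface` be the set of interfaces specified in the assignment. If for every interface `i ∈ S` the certification `sp` (instantiated with interface `i` and range `ipassmt i`) succeeds on the ruleset `rs` with initial sets `∅` and `∅`, then the ruleset provides spoofing protection: every packet `p` with `iface p ∈ S` that is accepted by `rs` satisfies `src p ∈ ipassmt (iface p)`. -/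
theorem sp_inv {Iface IP P M : Type*}
    (iface : P → Iface) (src : P → IP) (Matches : M → P → Prop)
    (i : Iface) (R : Set IP) :
    ∀ (rs : List (M × FwAction)) (A D : Set IP),
      sp iface src Matches i R rs A D →
      (A ∪ Aexact iface src Matches i rs) \ D ⊆ R := by
  intro rs
  induction rs with
  | nil =>
    intro A D h x hx
    refine h ⟨?_, hx.2⟩
    rcases hx.1 with hA | ⟨p, _, _, hacc⟩
    · exact hA
    · exact absurd hacc (by simp [accepted])
  | cons r rs ih =>
    obtain ⟨m, a⟩ := r
    cases a with
    | Accept =>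
      intro A D h x hx
      refine ih _ _ h ⟨?_, hx.2⟩
      rcases hx.1 with hA | ⟨p, hi, hs, hacc⟩
      · exact Or.inl (Or.inl hA)
      · rcases hacc with ⟨hm, _⟩ | ⟨hnm, hacc'⟩
        · exact Or.inl (Or.inr ⟨p, hi, hs, hm⟩)
        · exact Or.inr ⟨p, hi, hs, hacc'⟩
    | Drop =>
      intro A D h x hx
      rcases hx.1 with hA | ⟨p, hi, hs, hacc⟩
      · exact ih _ _ h ⟨Or.inl hA, fun hd => by
          rcases hd with hD | ⟨_, hnA⟩
          · exact hx.2 hD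
          · exact hnA hA⟩
      · rcases hacc with ⟨_, hbad⟩ | ⟨hnm, hacc'⟩
        · exact absurd hbad (by simp)
        · exact ih _ _ h ⟨Or.inr ⟨p, hi, hs, hacc'⟩, fun hd => by
            rcases hd with hD | ⟨hall, _⟩
            · exact hx.2 hD
            · exact hnm (hall p ⟨hi, hs⟩)⟩

theorem sp_sound_all_interfaces {Iface IP P M : Type*}
    (iface : P → Iface) (src : P → IP) (Matches : M → P → Prop)
    (ipassmt : Iface → Set IP) (S : Set Iface) (rs : List (M × FwAction))
    (h : ∀ i ∈ S, sp iface src Matches i (ipassmt i) rs ∅ ∅) :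
    ∀ p : P, iface p ∈ S → accepted Matches rs p → src p ∈ ipassmt (iface p) := by
  intro p hS hacc
  exact sp_inv iface src Matches (iface p) (ipassmt (iface p)) rs ∅ ∅
    (h _ hS) ⟨Or.inr ⟨p, rfl, rfl, hacc⟩, fun hf => hf⟩
end

section
/- Generalized soundness of `sp` (Lemma 1): let `rs₁` and `rs₂` be rulesets and `A, D : Set IP`. If `A_exact rs₁ ⊆ A`, `D ⊆ D_exact rs₁`, and `sp rs₂ A D` holds, then every packet `p` with `iface p = i` that is accepted by the concatenated ruleset `rs₁ ++ rs₂` satisfies `src p ∈ R`. -/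
section Helpers
variable {P M : Type*} (Matches : M → P → Prop)

theorem not_acc_den : ∀ (rs : List (M × FwAction)) (p : P),
    accepted Matches rs p → denied Matches rs p → False
  | [], _, h, _ => h
  | (m, a) :: rs, p, h1, h2 => by
      simp only [accepted, denied] at h1 h2
      rcases h1 with ⟨hm, ha⟩ | ⟨hm, h1⟩
      · rcases h2 with ⟨_, hd⟩ | ⟨hm', _⟩
        · rw [ha] at hd; exact FwAction.noConfusion hd
        · exact hm' hm
      · rcases h2 with ⟨hm', _⟩ | ⟨_, h2⟩
        · exact hm hm'
        · exact not_acc_den rs p h1 h2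

theorem accepted_append : ∀ (rs₁ rs₂ : List (M × FwAction)) (p : P),
    accepted Matches (rs₁ ++ rs₂) p ↔
      accepted Matches rs₁ p ∨
      (¬ accepted Matches rs₁ p ∧ ¬ denied Matches rs₁ p ∧ accepted Matches rs₂ p)
  | [], rs₂, p => by simp [accepted, denied]
  | (m, a) :: rs₁, rs₂, p => by
      by_cases hm : Matches m p
      · by_cases ha : a = FwAction.Accept <;>
          simp [accepted, denied, hm, ha, accepted_append rs₁ rs₂ p] <;>
          cases a <;> simp_all
      · simp [accepted, denied, hm, accepted_append rs₁ rs₂ p]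

theorem denied_append : ∀ (rs₁ rs₂ : List (M × FwAction)) (p : P),
    denied Matches (rs₁ ++ rs₂) p ↔
      denied Matches rs₁ p ∨
      (¬ accepted Matches rs₁ p ∧ ¬ denied Matches rs₁ p ∧ denied Matches rs₂ p)
  | [], rs₂, p => by simp [accepted, denied]
  | (m, a) :: rs₁, rs₂, p => by
      by_cases hm : Matches m p
      · by_cases ha : a = FwAction.Drop <;>
          simp [accepted, denied, hm, ha, denied_append rs₁ rs₂ p] <;>
          cases a <;> simp_all
      · simp [accepted, denied, hm, denied_append rs₁ rs₂ p]

end Helpers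

theorem sp_sound_generalized {Iface IP P M : Type*}
    (iface : P → Iface) (src : P → IP) (Matches : M → P → Prop)
    (i : Iface) (R : Set IP) (rs₁ rs₂ : List (M × FwAction)) (A D : Set IP)
    (hA : Aexact iface src Matches i rs₁ ⊆ A)
    (hD : D ⊆ Dexact iface src Matches i rs₁)
    (hsp : sp iface src Matches i R rs₂ A D) :
    ∀ p : P, iface p = i → accepted Matches (rs₁ ++ rs₂) p → src p ∈ R := by

  induction rs₂ generalizing rs₁ A D with
  | nil =>
    intro p hip hacc
    rw [List.append_nil] at hacc
    refine hsp ⟨hA ⟨p, hip, rfl, hacc⟩, ?_⟩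
    intro hDmem
    exact not_acc_den Matches rs₁ p hacc (hD hDmem p ⟨hip, rfl⟩)
  | cons r rs₂ ih =>
    obtain ⟨m, a⟩ := r
    cases a with
    | Accept =>
      simp only [sp] at hsp
      intro p hip hacc
      have hacc' : accepted Matches ((rs₁ ++ [(m, FwAction.Accept)]) ++ rs₂) p := by
        simpa using hacc
      refine ih (rs₁ ++ [(m, FwAction.Accept)]) _ D ?_ ?_ hsp p hip hacc'
      · rintro x ⟨q, hiq, hsq, haccq⟩
        rw [accepted_append] at haccq
        rcases haccq with h | ⟨_, _, h⟩
        · exact Or.inl (hA ⟨q, hiq, hsq, h⟩)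
        · simp [accepted] at h
          exact Or.inr ⟨q, hiq, hsq, h⟩
      · intro x hx q hq
        rw [denied_append]
        exact Or.inl (hD hx q hq)
    | Drop =>
      simp only [sp] at hsp
      intro p hip hacc
      have hacc' : accepted Matches ((rs₁ ++ [(m, FwAction.Drop)]) ++ rs₂) p := by
        simpa using hacc
      refine ih (rs₁ ++ [(m, FwAction.Drop)]) A _ ?_ ?_ hsp p hip hacc'
      · rintro x ⟨q, hiq, hsq, haccq⟩
        rw [accepted_append] at haccq
        rcases haccq with h | ⟨_, _, h⟩
        · exact hA ⟨q, hiq, hsq, h⟩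
        · simp [accepted] at h
      · rintro x (hx | ⟨hall, hxA⟩) q hq
        · rw [denied_append]
          exact Or.inl (hD hx q hq)
        · rw [denied_append]
          by_cases hd : denied Matches rs₁ q
          · exact Or.inl hd
          · refine Or.inr ⟨fun hacc1 => hxA (hA ⟨q, hq.1, hq.2, hacc1⟩), hd, ?_⟩
            simp only [denied]
            exact Or.inl ⟨hall q hq, trivial⟩
end

section
/- Induction step of Lemma 1 for `Accept` rules (preservation of the over/under-approximations): let `rs₁` be a ruleset, `m` a match condition, and `A, D : Set IP` with `A_exact rs₁ ⊆ A` and `D ⊆ D_exact rs₁`. Then `A_exact (rs₁ ++ [(m, Accept)]) ⊆ A ∪ {x | ∃ p, iface p = i ∧ src p = x ∧ matches m p}` and `D ⊆ D_exact (rs₁ ++ [(m, Accept)])`. -/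
lemma accepted_append_single {P M : Type*} (Matches : M → P → Prop)
    (rs : List (M × FwAction)) (m : M) (p : P)
    (h : accepted Matches (rs ++ [(m, FwAction.Accept)]) p) :
    accepted Matches rs p ∨ Matches m p := by
  induction rs with
  | nil => simp [accepted] at h; tauto
  | cons r rs ih =>
    obtain ⟨m', a⟩ := r
    rcases h with ⟨h1, h2⟩ | ⟨h1, h2⟩
    · exact Or.inl (Or.inl ⟨h1, h2⟩)
    · rcases ih h2 with h | h
      · exact Or.inl (Or.inr ⟨h1, h⟩)
      · exact Or.inr h

lemma denied_append_s6 {P M : Type*} (Matches : M → P → Prop)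
    (rs l : List (M × FwAction)) (p : P)
    (h : denied Matches rs p) : denied Matches (rs ++ l) p := by
  induction rs with
  | nil => simp [denied] at h
  | cons r rs ih =>
    obtain ⟨m', a⟩ := r
    rcases h with ⟨h1, h2⟩ | ⟨h1, h2⟩
    · exact Or.inl ⟨h1, h2⟩
    · exact Or.inr ⟨h1, ih h2⟩

theorem approx_preserved_accept {Iface IP P M : Type*}
    (iface : P → Iface) (src : P → IP) (Matches : M → P → Prop)
    (i : Iface) (rs₁ : List (M × FwAction)) (m : M) (A D : Set IP)
    (hA : Aexact iface src Matches i rs₁ ⊆ A)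
    (hD : D ⊆ Dexact iface src Matches i rs₁) :
    Aexact iface src Matches i (rs₁ ++ [(m, FwAction.Accept)]) ⊆
      A ∪ {x | ∃ p, iface p = i ∧ src p = x ∧ Matches m p} ∧
    D ⊆ Dexact iface src Matches i (rs₁ ++ [(m, FwAction.Accept)]) := by
  constructor
  · rintro x ⟨p, hip, hsp, hacc⟩
    rcases accepted_append_single Matches rs₁ m p hacc with h | h
    · exact Or.inl (hA ⟨p, hip, hsp, h⟩)
    · exact Or.inr ⟨p, hip, hsp, h⟩
  · intro x hx p hp
    exact denied_append_s6 Matches rs₁ _ p (hD hx p hp)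
end

section
/- Induction step of Lemma 1 for `Drop` rules (preservation of the over/under-approximations): let `rs₁` be a ruleset, `m` a match condition, and `A, D : Set IP` with `A_exact rs₁ ⊆ A` and `D ⊆ D_exact rs₁`. Then `A_exact (rs₁ ++ [(m, Drop)]) ⊆ A` and `D ∪ ({x | ∀ p, (iface p = i ∧ src p = x) → matches m p} \ A) ⊆ D_exact (rs₁ ++ [(m, Drop)])`. -/
lemma accepted_append_drop {P M : Type*} (Matches : M → P → Prop)
    (rs : List (M × FwAction)) (m : M) (p : P) :
    accepted Matches (rs ++ [(m, FwAction.Drop)]) p ↔ accepted Matches rs p := by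
  induction rs with
  | nil => simp [accepted]
  | cons r rs ih =>
    obtain ⟨m', a⟩ := r
    simp [accepted, ih]

lemma denied_append_drop {P M : Type*} (Matches : M → P → Prop)
    (rs : List (M × FwAction)) (m : M) (p : P)
    (h : denied Matches rs p ∨ (¬ accepted Matches rs p ∧ Matches m p)) :
    denied Matches (rs ++ [(m, FwAction.Drop)]) p := by
  induction rs with
  | nil =>
    simp [denied, accepted] at *
    tauto
  | cons r rs ih =>
    obtain ⟨m', a⟩ := r
    by_cases hm : Matches m' p
    · rcases h with h | ⟨hna, hmm⟩
      · rcases h with ⟨_, ha⟩ | ⟨hnm, _⟩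
        · exact Or.inl ⟨hm, ha⟩
        · exact absurd hm hnm
      · cases a with
        | Accept => exact absurd (Or.inl ⟨hm, rfl⟩) hna
        | Drop => exact Or.inl ⟨hm, rfl⟩
    · refine Or.inr ⟨hm, ih ?_⟩
      rcases h with h | ⟨hna, hmm⟩
      · rcases h with ⟨hm', _⟩ | ⟨_, hd⟩
        · exact absurd hm' hm
        · exact Or.inl hd
      · exact Or.inr ⟨fun ha => hna (Or.inr ⟨hm, ha⟩), hmm⟩

theorem approx_preserved_drop {Iface IP P M : Type*}
    (iface : P → Iface) (src : P → IP) (Matches : M → P → Prop)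
    (i : Iface) (rs₁ : List (M × FwAction)) (m : M) (A D : Set IP)
    (hA : Aexact iface src Matches i rs₁ ⊆ A)
    (hD : D ⊆ Dexact iface src Matches i rs₁) :
    Aexact iface src Matches i (rs₁ ++ [(m, FwAction.Drop)]) ⊆ A ∧
    D ∪ ({x | ∀ p, (iface p = i ∧ src p = x) → Matches m p} \ A) ⊆
      Dexact iface src Matches i (rs₁ ++ [(m, FwAction.Drop)]) := by
  constructor
  · rintro x ⟨p, hi, hs, hacc⟩
    exact hA ⟨p, hi, hs, (accepted_append_drop Matches rs₁ m p).1 hacc⟩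
  · rintro x (hx | ⟨hmem, hnA⟩) p hp
    · exact denied_append_drop Matches rs₁ m p (Or.inl (hD hx p hp))
    · refine denied_append_drop Matches rs₁ m p (Or.inr ⟨?_, hmem p hp⟩)
      exact fun ha => hnA (hA ⟨p, hp.1, hp.2, ha⟩)
end

section
/- Monotonicity of the certification algorithm `sp` in its accumulator arguments: for every ruleset `rs` and sets `A, A', D, D' : Set IP`, if `A ⊆ A'`, `D' ⊆ D`, and `sp rs A' D'` holds, then `sp rs A D` holds. (This is why replacing the exact accepted set by an over-approximation and the exact denied set by an under-approximation yields a sound certification.) -/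
theorem sp_mono {Iface IP P M : Type*}
    (iface : P → Iface) (src : P → IP) (Matches : M → P → Prop)
    (i : Iface) (R : Set IP) (rs : List (M × FwAction)) (A A' D D' : Set IP)
    (hA : A ⊆ A') (hD : D' ⊆ D) (h : sp iface src Matches i R rs A' D') :
    sp iface src Matches i R rs A D := by
  induction rs generalizing A A' D D' with
  | nil => exact fun x hx => h ⟨hA hx.1, fun c => hx.2 (hD c)⟩
  | cons r rs ih =>
    obtain ⟨m, a⟩ := r
    cases a with
    | Accept =>
      exact ih _ _ _ _ (Set.union_subset_union_left _ hA) hD h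
    | Drop =>
      refine ih _ _ _ _ hA ?_ h
      exact Set.union_subset_union hD (Set.diff_subset_diff_right hA)
end

section
/- Spoofing protection in the presence of unknown match conditions (the paper's `--foo`/`--bar` example): suppose `m₁` is a match condition with `matches m₁ p ↔ (iface p = i ∧ src p ∉ R)` for all packets `p`. Then for ALL match conditions `foo` and `bar` (with arbitrary, unknown matching behavior), the ruleset `[(foo, Drop), (m₁, Drop), (bar, Accept)]` implements spoofing protection for interface `i`: every packet `p` with `iface p = i` that is accepted satisfies `src p ∈ R`. -/
theorem unknowns_ruleset_spoofing_protection {Iface IP P M : Type*}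
    (iface : P → Iface) (src : P → IP) (Matches : M → P → Prop)
    (i : Iface) (R : Set IP) (m₁ : M)
    (hm₁ : ∀ p : P, Matches m₁ p ↔ (iface p = i ∧ src p ∉ R)) :
    ∀ foo bar : M, ∀ p : P, iface p = i →
      accepted Matches [(foo, FwAction.Drop), (m₁, FwAction.Drop), (bar, FwAction.Accept)] p →
      src p ∈ R := by
  intro foo bar p hi h
  simp [accepted] at h
  by_contra hR
  exact h.2.1 ((hm₁ p).mpr ⟨hi, hR⟩)
end
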